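/- arXiv:2305.16035 — 6 statements merged into one kernel-verified Lean document; each statement's English description precedes it below -/
import Mathlib

section
/- (Theorem 1, conclusion 1, per timestep) Fix d ≥ 1, μ : Fin d → ℝ, σx ≥ 0, and γ, σt ∈ ℝ with v := γ²σx² + σt² > 0. Let P = (Measure.pi fun i => gaussianReal (μ i) (σx²)) ⊗ (Measure.pi fun i => gaussianReal 0 1). Then the pushforward of P under (x, z) ↦ (fun i => −(γ * x i + σt * z i − γ * μ i)/v) equals Measure.pi (fun i => gaussianReal 0 (1/v)); i.e., the score of the diffused marginal evaluated at the diffused natural sample x_t = γ•x₀ + σt•z has independent coordinates distributed N(0, ζ²) with ζ² = 1/(γ²σx² + σt²). -/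
/-!
Coordinatewise, the score `-(γ x + σt z - γ m) / v` is an affine combination of the independent
Gaussians `x ~ N(m, σx²)` and `z ~ N(0, 1)`, hence Gaussian with mean `0` and variance
`(γ² σx² + σt²) / v² = 1 / v`; the coordinates stay independent because the product measure
`(⊗ᵢ N(mᵢ, σx²)) ⊗ (⊗ᵢ N(0, 1))` is the product over `i` of the pairs `N(mᵢ, σx²) ⊗ N(0, 1)`.
-/

open MeasureTheory ProbabilityTheory
open scoped NNReal

namespace MeasureTheory.Measure

lemma map_prod_pi_pi {ι α β γ : Type*} [Fintype ι] [MeasurableSpace α] [MeasurableSpace β]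
    [MeasurableSpace γ] (μ : ι → Measure α) (ν : ι → Measure β) [∀ i, IsFiniteMeasure (μ i)]
    [∀ i, IsFiniteMeasure (ν i)] {f : ι → α × β → γ} (hf : ∀ i, Measurable (f i)) :
    ((Measure.pi μ).prod (Measure.pi ν)).map (fun p i ↦ f i (p.1 i, p.2 i)) =
      Measure.pi fun i ↦ ((μ i).prod (ν i)).map (f i) := by
  rw [← (measurePreserving_arrowProdEquivProdArrow α β ι μ ν).map_eq,
    map_map (by fun_prop) (MeasurableEquiv.measurable _)]
  exact pi_map_pi fun i ↦ (hf i).aemeasurable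

end MeasureTheory.Measure

namespace ProbabilityTheory

lemma gaussianReal_prod_map_affine (a b c : ℝ) {m₁ m₂ : ℝ} {v₁ v₂ : ℝ≥0} :
    ((gaussianReal m₁ v₁).prod (gaussianReal m₂ v₂)).map (fun p ↦ a * p.1 + b * p.2 + c) =
      gaussianReal (a * m₁ + b * m₂ + c)
        (.mk (a ^ 2) (sq_nonneg a) * v₁ + .mk (b ^ 2) (sq_nonneg b) * v₂) := by
  have hfactor : (fun p : ℝ × ℝ ↦ a * p.1 + b * p.2 + c) =
      (· + c) ∘ (fun p ↦ p.1 + p.2) ∘ Prod.map (a * ·) (b * ·) := rfl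
  rw [hfactor, ← Measure.map_map (by fun_prop) (by fun_prop),
    ← Measure.map_map (by fun_prop) (by fun_prop),
    ← Measure.map_prod_map _ _ (by fun_prop) (by fun_prop),
    gaussianReal_map_const_mul, gaussianReal_map_const_mul, ← Measure.conv,
    gaussianReal_conv_gaussianReal, gaussianReal_map_add_const]

end ProbabilityTheory

theorem score_of_diffused_natural_law_general (d : ℕ) (μ : Fin d → ℝ) (σx : ℝ)
    (γ σt : ℝ) (v : ℝ) (hv : v = γ ^ 2 * σx ^ 2 + σt ^ 2) (hvpos : 0 < v) :
    Measure.map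
      (fun p : (Fin d → ℝ) × (Fin d → ℝ) =>
        fun i => -(γ * p.1 i + σt * p.2 i - γ * μ i) / v)
      ((Measure.pi fun i => gaussianReal (μ i) ((σx ^ 2).toNNReal)).prod
        (Measure.pi fun _ => gaussianReal 0 1))
    = Measure.pi fun _ => gaussianReal 0 ((1 / v).toNNReal) := by
  rw [Measure.map_prod_pi_pi _ _
    (f := fun i (p : ℝ × ℝ) ↦ -(γ * p.1 + σt * p.2 - γ * μ i) / v) fun i ↦ by fun_prop]
  congr 1
  funext i
  have haffine : (fun p : ℝ × ℝ ↦ -(γ * p.1 + σt * p.2 - γ * μ i) / v) =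
      fun p ↦ (-γ / v) * p.1 + (-σt / v) * p.2 + γ * μ i / v := by
    funext p
    ring
  rw [haffine, gaussianReal_prod_map_affine]
  congr 1
  · ring
  · rw [← NNReal.coe_inj]
    simp only [NNReal.coe_add, NNReal.coe_mul, NNReal.coe_mk, NNReal.coe_one,
      Real.coe_toNNReal _ (sq_nonneg σx), Real.coe_toNNReal _ (one_div_pos.2 hvpos).le]
    rw [hv] at hvpos ⊢
    field_simp

/-- Theorem 1, conclusion 1, per timestep: the score of the diffused marginal evaluated
at the diffused natural sample `x_t = γ•x₀ + σt•z` has independent coordinates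
distributed `N(0, ζ²)` with `ζ² = 1/(γ²σx² + σt²)`. -/
theorem score_of_diffused_natural_law (d : ℕ) (hd : 1 ≤ d) (μ : Fin d → ℝ) (σx : ℝ)
    (hσx : 0 ≤ σx) (γ σt : ℝ) (v : ℝ) (hv : v = γ ^ 2 * σx ^ 2 + σt ^ 2) (hvpos : 0 < v) :
    Measure.map
      (fun p : (Fin d → ℝ) × (Fin d → ℝ) =>
        fun i => -(γ * p.1 i + σt * p.2 i - γ * μ i) / v)
      ((Measure.pi fun i => gaussianReal (μ i) ((σx ^ 2).toNNReal)).prod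
        (Measure.pi fun _ => gaussianReal 0 1))
    = Measure.pi fun _ => gaussianReal 0 ((1 / v).toNNReal) :=
  score_of_diffused_natural_law_general d μ σx γ σt v hv hvpos
end

section
/- (Theorem 1, conclusion 2, per timestep; perturbation added before diffusion) Fix d ≥ 1, μ : Fin d → ℝ, σx ≥ 0, γ, σt ∈ ℝ with v := γ²σx² + σt² > 0, and ε : Fin d → ℝ. Let P = (Measure.pi fun i => gaussianReal (μ i) (σx²)) ⊗ (Measure.pi fun i => gaussianReal 0 1). Then the pushforward of P under (y, z) ↦ (fun i => −(γ * (y i + ε i) + σt * z i − γ * μ i)/v) equals Measure.pi (fun i => gaussianReal (−γ * ε i / v) (1/v)); i.e., if the adversarial sample ŷ₀ = y + ε is diffused to ŷ_t = γ•ŷ₀ + σt•z, the natural-marginal score at ŷ_t has independent coordinates with mean −γ·ε_i/v and variance 1/v. -/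
/-! In each coordinate the score `-(γ (y + ε) + σt z - γ μ) / v` is an affine function of two
independent Gaussians `y ~ N(μ, σx²)` and `z ~ N(0, 1)`, hence Gaussian with mean `-γ ε / v` and
variance `(γ² σx² + σt²) / v² = 1 / v`. Since the map acts coordinatewise, the product structure
of the law of `(y, z)` is carried to the image. -/

open MeasureTheory ProbabilityTheory
open scoped NNReal

lemma gaussianReal_prod_map_linear (m₁ m₂ : ℝ) (v₁ v₂ : ℝ≥0) (a b c : ℝ) :
    ((gaussianReal m₁ v₁).prod (gaussianReal m₂ v₂)).map (fun p => a * p.1 + b * p.2 + c)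
      = gaussianReal (a * m₁ + b * m₂ + c)
          (.mk (a ^ 2) (sq_nonneg _) * v₁ + .mk (b ^ 2) (sq_nonneg _) * v₂) := by
  have hdecomp : (fun p : ℝ × ℝ => a * p.1 + b * p.2 + c)
      = (· + c) ∘ (fun q : ℝ × ℝ => q.1 + q.2) ∘ Prod.map (a * ·) (b * ·) := rfl
  rw [hdecomp, ← Measure.map_map (by fun_prop) (by fun_prop),
    ← Measure.map_map (by fun_prop) (by fun_prop),
    ← Measure.map_prod_map _ _ (by fun_prop) (by fun_prop),
    gaussianReal_map_const_mul, gaussianReal_map_const_mul, ← Measure.conv,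
    gaussianReal_conv_gaussianReal, gaussianReal_map_add_const]

lemma MeasureTheory.Measure.map_prod_pi_pi_s4 {ι α β γ : Type*} [Fintype ι] [MeasurableSpace α]
    [MeasurableSpace β] [MeasurableSpace γ] (μ : ι → Measure α) (ν : ι → Measure β)
    [∀ i, SigmaFinite (μ i)] [∀ i, SigmaFinite (ν i)] (ρ : ι → Measure γ) [∀ i, SigmaFinite (ρ i)]
    (f : ι → α × β → γ) (hf : ∀ i, Measurable (f i))
    (hmap : ∀ i, ((μ i).prod (ν i)).map (f i) = ρ i) :
    ((Measure.pi μ).prod (Measure.pi ν)).map (fun p i => f i (p.1 i, p.2 i))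
      = Measure.pi ρ := by
  rw [← (measurePreserving_arrowProdEquivProdArrow α β ι μ ν).map_eq,
    Measure.map_map (by fun_prop) (MeasurableEquiv.arrowProdEquivProdArrow α β ι).measurable]
  exact (measurePreserving_pi _ _ fun i => ⟨hf i, hmap i⟩).map_eq

lemma gaussianReal_prod_map_score (m e γ σt σx v : ℝ) (hv : v = γ ^ 2 * σx ^ 2 + σt ^ 2)
    (hvpos : 0 < v) :
    ((gaussianReal m (σx ^ 2).toNNReal).prod (gaussianReal 0 1)).map
        (fun q : ℝ × ℝ => -(γ * (q.1 + e) + σt * q.2 - γ * m) / v)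
      = gaussianReal (-γ * e / v) (1 / v).toNNReal := by
  have hlin : (fun q : ℝ × ℝ => -(γ * (q.1 + e) + σt * q.2 - γ * m) / v)
      = fun q => (-γ / v) * q.1 + (-σt / v) * q.2 + γ * (m - e) / v := by
    funext q
    ring
  rw [hlin, gaussianReal_prod_map_linear]
  congr 1
  · ring
  · rw [← NNReal.coe_inj]
    simp only [NNReal.coe_add, NNReal.coe_mul, NNReal.coe_mk, NNReal.coe_one,
      Real.coe_toNNReal _ (sq_nonneg σx), Real.coe_toNNReal _ (by positivity : 0 ≤ 1 / v)]
    field_simp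
    rw [hv]

theorem score_of_diffused_adversarial_law_general (d : ℕ) (μ : Fin d → ℝ) (σx : ℝ)
    (γ σt : ℝ) (v : ℝ) (hv : v = γ ^ 2 * σx ^ 2 + σt ^ 2) (hvpos : 0 < v)
    (ε : Fin d → ℝ) :
    Measure.map
      (fun p : (Fin d → ℝ) × (Fin d → ℝ) =>
        fun i => -(γ * (p.1 i + ε i) + σt * p.2 i - γ * μ i) / v)
      ((Measure.pi fun i => gaussianReal (μ i) ((σx ^ 2).toNNReal)).prod
        (Measure.pi fun _ => gaussianReal 0 1))
    = Measure.pi fun i => gaussianReal (-γ * ε i / v) ((1 / v).toNNReal) :=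
  Measure.map_prod_pi_pi_s4 _ _ _ (fun i q => -(γ * (q.1 + ε i) + σt * q.2 - γ * μ i) / v)
    (fun _ => by fun_prop)
    (fun i => gaussianReal_prod_map_score (μ i) (ε i) γ σt σx v hv hvpos)

/-- Theorem 1, conclusion 2, per timestep, perturbation added before diffusion: if the
adversarial sample `ŷ₀ = y + ε` is diffused to `ŷ_t = γ•ŷ₀ + σt•z`, the natural-marginal
score at `ŷ_t` has independent coordinates with mean `−γ·ε_i/v` and variance `1/v`. -/
theorem score_of_diffused_adversarial_law (d : ℕ) (hd : 1 ≤ d) (μ : Fin d → ℝ) (σx : ℝ)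
    (hσx : 0 ≤ σx) (γ σt : ℝ) (v : ℝ) (hv : v = γ ^ 2 * σx ^ 2 + σt ^ 2) (hvpos : 0 < v)
    (ε : Fin d → ℝ) :
    Measure.map
      (fun p : (Fin d → ℝ) × (Fin d → ℝ) =>
        fun i => -(γ * (p.1 i + ε i) + σt * p.2 i - γ * μ i) / v)
      ((Measure.pi fun i => gaussianReal (μ i) ((σx ^ 2).toNNReal)).prod
        (Measure.pi fun _ => gaussianReal 0 1))
    = Measure.pi fun i => gaussianReal (-γ * ε i / v) ((1 / v).toNNReal) :=
  score_of_diffused_adversarial_law_general d μ σx γ σt v hv hvpos ε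
end

section
/- (Theorem 1, conclusion 3, natural pair, per timestep) Fix d ≥ 1, μ : Fin d → ℝ, σx ≥ 0, γ, σt ∈ ℝ with v := γ²σx² + σt² > 0. Let P be the fourfold product measure under which X₀, Y₀ are independent with law Measure.pi (fun i => gaussianReal (μ i) (σx²)) and Z, Z′ are independent with law Measure.pi (fun i => gaussianReal 0 1), all four mutually independent. Then the law of the difference of perturbation scores, (fun i => −(γ * X₀ i + σt * Z i − γ * μ i)/v + (γ * Y₀ i + σt * Z′ i − γ * μ i)/v), is Measure.pi (fun i => gaussianReal 0 (2/v)); i.e., for two independent natural samples the difference of their per-timestep perturbation scores has independent coordinates distributed N(0, 2ζ²) with ζ² = 1/v. -/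
/-!
In each coordinate the score difference is `(γ/v)(Y₀ᵢ - X₀ᵢ) + (σt/v)(Z′ᵢ - Zᵢ)`, a linear
combination of four independent Gaussians, hence Gaussian with mean `0` and variance
`2(γ²σx² + σt²)/v² = 2/v`. The four product measures are products over the coordinates, so the
law of the whole vector is the product of these one-dimensional laws.
-/

open MeasureTheory ProbabilityTheory
open scoped NNReal

lemma gaussianReal_map_add_prod (m₁ m₂ : ℝ) (v₁ v₂ : ℝ≥0) :
    ((gaussianReal m₁ v₁).prod (gaussianReal m₂ v₂)).map (fun p ↦ p.1 + p.2)
      = gaussianReal (m₁ + m₂) (v₁ + v₂) :=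
  gaussianReal_conv_gaussianReal

lemma gaussianReal_map_linear_prod (a b m₁ m₂ : ℝ) (v₁ v₂ : ℝ≥0) :
    ((gaussianReal m₁ v₁).prod (gaussianReal m₂ v₂)).map (fun p ↦ a * p.1 + b * p.2)
      = gaussianReal (a * m₁ + b * m₂)
          (.mk (a ^ 2) (sq_nonneg _) * v₁ + .mk (b ^ 2) (sq_nonneg _) * v₂) := by
  have h_split : (fun p : ℝ × ℝ ↦ a * p.1 + b * p.2)
      = (fun p ↦ p.1 + p.2) ∘ Prod.map (a * ·) (b * ·) := rfl
  rw [h_split, ← Measure.map_map (by fun_prop) (by fun_prop),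
    ← Measure.map_prod_map _ _ (by fun_prop) (by fun_prop),
    gaussianReal_map_const_mul, gaussianReal_map_const_mul, gaussianReal_map_add_prod]

lemma pi_prod_pi_eq_map_pi_prod {ι α β : Type*} [Fintype ι] [MeasurableSpace α] [MeasurableSpace β]
    (μ : ι → Measure α) (ν : ι → Measure β) [∀ i, SigmaFinite (μ i)] [∀ i, SigmaFinite (ν i)] :
    (Measure.pi μ).prod (Measure.pi ν)
      = (Measure.pi fun i ↦ (μ i).prod (ν i)).map (MeasurableEquiv.arrowProdEquivProdArrow α β ι) :=
  (measurePreserving_arrowProdEquivProdArrow α β ι μ ν).map_eq.symm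

lemma map_prod_prod_pi {ι α β γ δ ε : Type*} [Fintype ι] [MeasurableSpace α] [MeasurableSpace β]
    [MeasurableSpace γ] [MeasurableSpace δ] [MeasurableSpace ε]
    (μ₁ : ι → Measure α) (μ₂ : ι → Measure β) (μ₃ : ι → Measure γ) (μ₄ : ι → Measure δ)
    [∀ i, IsFiniteMeasure (μ₁ i)] [∀ i, IsFiniteMeasure (μ₂ i)]
    [∀ i, IsFiniteMeasure (μ₃ i)] [∀ i, IsFiniteMeasure (μ₄ i)]
    (f : ι → (α × β) × (γ × δ) → ε) (hf : ∀ i, Measurable (f i)) :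
    (((Measure.pi μ₁).prod (Measure.pi μ₂)).prod ((Measure.pi μ₃).prod (Measure.pi μ₄))).map
        (fun p i ↦ f i ((p.1.1 i, p.1.2 i), (p.2.1 i, p.2.2 i)))
      = Measure.pi fun i ↦ (((μ₁ i).prod (μ₂ i)).prod ((μ₃ i).prod (μ₄ i))).map (f i) := by
  rw [pi_prod_pi_eq_map_pi_prod μ₁, pi_prod_pi_eq_map_pi_prod μ₃,
    Measure.map_prod_map _ _ (by fun_prop) (by fun_prop), pi_prod_pi_eq_map_pi_prod,
    Measure.map_map (by fun_prop) (by fun_prop), Measure.map_map (by fun_prop) (by fun_prop),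
    ← Measure.pi_map_pi fun i ↦ (hf i).aemeasurable]
  rfl

lemma map_scoreDifference_gaussianReal (m σx γ σt v : ℝ) (hv : v = γ ^ 2 * σx ^ 2 + σt ^ 2)
    (hvpos : 0 < v) :
    (((gaussianReal m (σx ^ 2).toNNReal).prod (gaussianReal m (σx ^ 2).toNNReal)).prod
        ((gaussianReal 0 1).prod (gaussianReal 0 1))).map
      (fun q ↦ -(γ * q.1.1 + σt * q.2.1 - γ * m) / v + (γ * q.1.2 + σt * q.2.2 - γ * m) / v)
      = gaussianReal 0 (2 / v).toNNReal := by
  have h_split : (fun q : (ℝ × ℝ) × (ℝ × ℝ) ↦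
        -(γ * q.1.1 + σt * q.2.1 - γ * m) / v + (γ * q.1.2 + σt * q.2.2 - γ * m) / v)
      = (fun p ↦ p.1 + p.2) ∘ Prod.map (fun p ↦ (-γ / v) * p.1 + (γ / v) * p.2)
          (fun p ↦ (-σt / v) * p.1 + (σt / v) * p.2) := by
    funext q
    simp only [Function.comp_apply, Prod.map_fst, Prod.map_snd]
    ring
  rw [h_split, ← Measure.map_map (by fun_prop) (by fun_prop),
    ← Measure.map_prod_map _ _ (by fun_prop) (by fun_prop),
    gaussianReal_map_linear_prod, gaussianReal_map_linear_prod, gaussianReal_map_add_prod]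
  congr 1
  · ring
  · ext
    subst hv
    push_cast
    rw [Real.coe_toNNReal _ (sq_nonneg σx), Real.coe_toNNReal _ (by positivity)]
    field_simp
    ring

theorem score_difference_natural_pair_law_general (d : ℕ) (μ : Fin d → ℝ) (σx : ℝ)
    (γ σt : ℝ) (v : ℝ) (hv : v = γ ^ 2 * σx ^ 2 + σt ^ 2) (hvpos : 0 < v) :
    Measure.map
      (fun p : ((Fin d → ℝ) × (Fin d → ℝ)) × ((Fin d → ℝ) × (Fin d → ℝ)) =>
        fun i => -(γ * p.1.1 i + σt * p.2.1 i - γ * μ i) / v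
          + (γ * p.1.2 i + σt * p.2.2 i - γ * μ i) / v)
      (((Measure.pi fun i => gaussianReal (μ i) ((σx ^ 2).toNNReal)).prod
          (Measure.pi fun i => gaussianReal (μ i) ((σx ^ 2).toNNReal))).prod
        ((Measure.pi fun _ => gaussianReal 0 1).prod
          (Measure.pi fun _ => gaussianReal 0 1)))
    = Measure.pi fun _ => gaussianReal 0 ((2 / v).toNNReal) := by
  rw [map_prod_prod_pi _ _ _ _
    (fun i q ↦ -(γ * q.1.1 + σt * q.2.1 - γ * μ i) / v + (γ * q.1.2 + σt * q.2.2 - γ * μ i) / v)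
    (fun _ ↦ by fun_prop)]
  simp_rw [map_scoreDifference_gaussianReal _ σx γ σt v hv hvpos]

/-- Theorem 1, conclusion 3, natural pair, per timestep: for two independent natural
samples `X₀, Y₀` with independent noises `Z, Z′`, the difference of their per-timestep
perturbation scores has independent coordinates distributed `N(0, 2ζ²)`
with `ζ² = 1/v`, `v = γ²σx² + σt²`. -/
theorem score_difference_natural_pair_law (d : ℕ) (hd : 1 ≤ d) (μ : Fin d → ℝ) (σx : ℝ)
    (hσx : 0 ≤ σx) (γ σt : ℝ) (v : ℝ) (hv : v = γ ^ 2 * σx ^ 2 + σt ^ 2) (hvpos : 0 < v) :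
    Measure.map
      (fun p : ((Fin d → ℝ) × (Fin d → ℝ)) × ((Fin d → ℝ) × (Fin d → ℝ)) =>
        fun i => -(γ * p.1.1 i + σt * p.2.1 i - γ * μ i) / v
          + (γ * p.1.2 i + σt * p.2.2 i - γ * μ i) / v)
      (((Measure.pi fun i => gaussianReal (μ i) ((σx ^ 2).toNNReal)).prod
          (Measure.pi fun i => gaussianReal (μ i) ((σx ^ 2).toNNReal))).prod
        ((Measure.pi fun _ => gaussianReal 0 1).prod
          (Measure.pi fun _ => gaussianReal 0 1)))
    = Measure.pi fun _ => gaussianReal 0 ((2 / v).toNNReal) :=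
  score_difference_natural_pair_law_general d μ σx γ σt v hv hvpos
end

section
/- (Theorem 1, conclusion 3, natural–adversarial pair, per timestep) Fix d ≥ 1, μ : Fin d → ℝ, σx ≥ 0, γ, σt ∈ ℝ with v := γ²σx² + σt² > 0, and ε : Fin d → ℝ. Let P be the fourfold product measure under which X₀, Y₀ are independent with law Measure.pi (fun i => gaussianReal (μ i) (σx²)) and Z, Z′ are independent with law Measure.pi (fun i => gaussianReal 0 1), all four mutually independent. Then the law of (fun i => −(γ * X₀ i + σt * Z i − γ * μ i)/v + (γ * Y₀ i + σt * Z′ i + ε i − γ * μ i)/v) is Measure.pi (fun i => gaussianReal (ε i / v) (2/v)); i.e., the difference between the perturbation score of a natural sample and that of an independent ε-shifted adversarial sample has independent coordinates distributed N(ε_i/v, 2ζ²) with ζ² = 1/v. -/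
/-!
In each coordinate the score difference is `(γ/v)(Y₀ᵢ - X₀ᵢ) + (σt/v)(Z′ᵢ - Zᵢ) + εᵢ/v`, an affine
form in four independent Gaussians, hence Gaussian with mean `εᵢ/v` and variance
`2(γ²σx² + σt²)/v² = 2/v`. Regrouping the product of the four product measures as a product
over coordinates of fourfold products shows that the coordinates are independent.
-/

open MeasureTheory ProbabilityTheory
open scoped NNReal

lemma gaussianReal_prod_gaussianReal_map_linear (m₁ m₂ : ℝ) (v₁ v₂ : ℝ≥0) (a b : ℝ) :
    ((gaussianReal m₁ v₁).prod (gaussianReal m₂ v₂)).map (fun p => a * p.1 + b * p.2)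
      = gaussianReal (a * m₁ + b * m₂)
          (.mk (a ^ 2) (sq_nonneg a) * v₁ + .mk (b ^ 2) (sq_nonneg b) * v₂) := by
  have h : (fun p : ℝ × ℝ => a * p.1 + b * p.2)
      = (fun p => p.1 + p.2) ∘ Prod.map (a * ·) (b * ·) := rfl
  rw [h, ← Measure.map_map measurable_add (by fun_prop),
    ← Measure.map_prod_map _ _ (by fun_prop) (by fun_prop),
    gaussianReal_map_const_mul, gaussianReal_map_const_mul, ← Measure.conv,
    gaussianReal_conv_gaussianReal]

lemma gaussianReal_map_score_difference (m c σx γ σt v : ℝ)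
    (hv : v = γ ^ 2 * σx ^ 2 + σt ^ 2) (hvpos : 0 < v) :
    (((gaussianReal m (σx ^ 2).toNNReal).prod (gaussianReal m (σx ^ 2).toNNReal)).prod
        ((gaussianReal 0 1).prod (gaussianReal 0 1))).map
      (fun q => -(γ * q.1.1 + σt * q.2.1 - γ * m) / v + (γ * q.1.2 + σt * q.2.2 + c - γ * m) / v)
    = gaussianReal (c / v) (2 / v).toNNReal := by
  have h : (fun q : (ℝ × ℝ) × (ℝ × ℝ) =>
        -(γ * q.1.1 + σt * q.2.1 - γ * m) / v + (γ * q.1.2 + σt * q.2.2 + c - γ * m) / v)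
      = (· + c / v) ∘ (fun r : ℝ × ℝ => r.1 + r.2) ∘
          Prod.map (fun p => -γ / v * p.1 + γ / v * p.2)
            (fun p => -σt / v * p.1 + σt / v * p.2) := by
    funext q
    simp only [Function.comp_apply, Prod.map_fst, Prod.map_snd]
    ring
  rw [h, ← Measure.map_map (measurable_add_const _) (by fun_prop),
    ← Measure.map_map measurable_add (by fun_prop),
    ← Measure.map_prod_map _ _ (by fun_prop) (by fun_prop),
    gaussianReal_prod_gaussianReal_map_linear, gaussianReal_prod_gaussianReal_map_linear,
    ← Measure.conv, gaussianReal_conv_gaussianReal, gaussianReal_map_add_const]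
  congr 1
  · ring
  · ext
    push_cast [Real.coe_toNNReal _ (sq_nonneg σx),
      Real.coe_toNNReal _ (by positivity : 0 ≤ 2 / v)]
    subst hv
    field_simp
    ring

theorem score_difference_adversarial_pair_law_general (d : ℕ) (μ : Fin d → ℝ)
    (σx : ℝ) (γ σt : ℝ) (v : ℝ) (hv : v = γ ^ 2 * σx ^ 2 + σt ^ 2)
    (hvpos : 0 < v) (ε : Fin d → ℝ) :
    Measure.map
      (fun p : ((Fin d → ℝ) × (Fin d → ℝ)) × ((Fin d → ℝ) × (Fin d → ℝ)) =>
        fun i => -(γ * p.1.1 i + σt * p.2.1 i - γ * μ i) / v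
          + (γ * p.1.2 i + σt * p.2.2 i + ε i - γ * μ i) / v)
      (((Measure.pi fun i => gaussianReal (μ i) ((σx ^ 2).toNNReal)).prod
          (Measure.pi fun i => gaussianReal (μ i) ((σx ^ 2).toNNReal))).prod
        ((Measure.pi fun _ => gaussianReal 0 1).prod
          (Measure.pi fun _ => gaussianReal 0 1)))
    = Measure.pi fun i => gaussianReal (ε i / v) ((2 / v).toNNReal) := by
  set X : Fin d → Measure ℝ := fun i => gaussianReal (μ i) (σx ^ 2).toNNReal
  set Z : Fin d → Measure ℝ := fun _ => gaussianReal 0 1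
  rw [← (measurePreserving_arrowProdEquivProdArrow ℝ ℝ (Fin d) X X).map_eq,
    ← (measurePreserving_arrowProdEquivProdArrow ℝ ℝ (Fin d) Z Z).map_eq,
    Measure.map_prod_map _ _ (MeasurableEquiv.measurable _) (MeasurableEquiv.measurable _),
    ← (measurePreserving_arrowProdEquivProdArrow (ℝ × ℝ) (ℝ × ℝ) (Fin d) _ _).map_eq,
    Measure.map_map (by fun_prop) (MeasurableEquiv.measurable _),
    Measure.map_map (by fun_prop) (by fun_prop)]
  refine (Measure.pi_map_pi (f := fun i (q : (ℝ × ℝ) × (ℝ × ℝ)) =>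
      -(γ * q.1.1 + σt * q.2.1 - γ * μ i) / v + (γ * q.1.2 + σt * q.2.2 + ε i - γ * μ i) / v)
    (fun i => by fun_prop)).trans (congrArg Measure.pi (funext fun i => ?_))
  exact gaussianReal_map_score_difference (μ i) (ε i) σx γ σt v hv hvpos

/-- Theorem 1, conclusion 3, natural–adversarial pair, per timestep: the difference
between the perturbation score of a natural sample and that of an independent ε-shifted
adversarial sample has independent coordinates distributed `N(ε_i/v, 2ζ²)`
with `ζ² = 1/v`, `v = γ²σx² + σt²`. -/
theorem score_difference_adversarial_pair_law (d : ℕ) (hd : 1 ≤ d) (μ : Fin d → ℝ)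
    (σx : ℝ) (hσx : 0 ≤ σx) (γ σt : ℝ) (v : ℝ) (hv : v = γ ^ 2 * σx ^ 2 + σt ^ 2)
    (hvpos : 0 < v) (ε : Fin d → ℝ) :
    Measure.map
      (fun p : ((Fin d → ℝ) × (Fin d → ℝ)) × ((Fin d → ℝ) × (Fin d → ℝ)) =>
        fun i => -(γ * p.1.1 i + σt * p.2.1 i - γ * μ i) / v
          + (γ * p.1.2 i + σt * p.2.2 i + ε i - γ * μ i) / v)
      (((Measure.pi fun i => gaussianReal (μ i) ((σx ^ 2).toNNReal)).prod
          (Measure.pi fun i => gaussianReal (μ i) ((σx ^ 2).toNNReal))).prod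
        ((Measure.pi fun _ => gaussianReal 0 1).prod
          (Measure.pi fun _ => gaussianReal 0 1)))
    = Measure.pi fun i => gaussianReal (ε i / v) ((2 / v).toNNReal) :=
  score_difference_adversarial_pair_law_general d μ σx γ σt v hv hvpos ε
end

section
/- (Theorem 1, conclusion 3, EPS difference law) Fix d ≥ 1, T > 0, μ : Fin d → ℝ, σx ≥ 0, ε : Fin d → ℝ, and measurable schedules γ, σ : ℝ → ℝ with v t := (γ t)²σx² + (σ t)² > 0 for t ∈ [0,T], and with t ↦ γ t / v t, t ↦ σ t / v t and t ↦ 1 / v t integrable on [0,T]. Let X₀, Y₀ (law Measure.pi (fun i => gaussianReal (μ i) (σx²))) and Z, Z′ (law Measure.pi (fun i => gaussianReal 0 1)) be mutually independent. Let S = (1/T)·∫₀^T (fun i => −(γ t * X₀ i + σ t * Z i − γ t * μ i)/(v t)) dt and Ŝ = (1/T)·∫₀^T (fun i => −(γ t * Y₀ i + σ t * Z′ i + ε i − γ t * μ i)/(v t)) dt. Then the law of S − Ŝ is Measure.pi (fun i => gaussianReal (c · ε i) (2(a²σx² + b²))), where a = (1/T)∫₀^T γ t/(v t) dt, b = (1/T)∫₀^T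 σ t/(v t) dt, c = (1/T)∫₀^T 1/(v t) dt; i.e., the difference between the EPS of a natural sample and the EPS of an independent adversarial sample is Gaussian with mean μ_S = c•ε and per-coordinate variance 2(a²σx² + b²). -/
/-!
Averaging over time is linear, so coordinate `i` of `S - Ŝ` equals
`a (Y₀ i - X₀ i) + b (Z′ i - Z i) + c ε i`. The four coordinates entering it are independent
Gaussians, and Gaussians are closed under scaling, translation and convolution, so this is
`N(c ε i, a² · 2σx² + b² · 2)`. Distinct coordinates involve disjoint independent variables, so
the joint law is the product of these.
-/

open MeasureTheory ProbabilityTheory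
open scoped NNReal

lemma IntervalIntegrable.smul_const {E : Type*} [NormedAddCommGroup E] [NormedSpace ℝ E]
    {f : ℝ → ℝ} {μ : Measure ℝ} {a b : ℝ} (hf : IntervalIntegrable f μ a b) (c : E) :
    IntervalIntegrable (fun t => f t • c) μ a b :=
  ⟨hf.1.smul_const c, hf.2.smul_const c⟩

section Score

variable {ι : Type*} [Fintype ι] {γ σ v : ℝ → ℝ} {a b : ℝ}

lemma intervalIntegral_score (hγ : IntervalIntegrable (fun t => γ t / v t) volume a b)
    (hσ : IntervalIntegrable (fun t => σ t / v t) volume a b) (x z m : ι → ℝ) :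
    ∫ t in a..b, (fun i => -(γ t * x i + σ t * z i - γ t * m i) / v t) =
      (∫ t in a..b, γ t / v t) • (m - x) - (∫ t in a..b, σ t / v t) • z := by
  have h : (fun t => fun i => -(γ t * x i + σ t * z i - γ t * m i) / v t) =
      fun t => (γ t / v t) • (m - x) - (σ t / v t) • z := by
    ext t i
    simp only [Pi.sub_apply, Pi.smul_apply, smul_eq_mul]
    ring
  rw [h, intervalIntegral.integral_sub (hγ.smul_const _) (hσ.smul_const _),
    intervalIntegral.integral_smul_const, intervalIntegral.integral_smul_const]

lemma intervalIntegral_adversarialScore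
    (hγ : IntervalIntegrable (fun t => γ t / v t) volume a b)
    (hσ : IntervalIntegrable (fun t => σ t / v t) volume a b)
    (hv : IntervalIntegrable (fun t => 1 / v t) volume a b) (x z e m : ι → ℝ) :
    ∫ t in a..b, (fun i => -(γ t * x i + σ t * z i + e i - γ t * m i) / v t) =
      (∫ t in a..b, γ t / v t) • (m - x) - (∫ t in a..b, σ t / v t) • z
        - (∫ t in a..b, 1 / v t) • e := by
  have h : (fun t => fun i => -(γ t * x i + σ t * z i + e i - γ t * m i) / v t) =
      fun t => (γ t / v t) • (m - x) - (σ t / v t) • z - (1 / v t) • e := by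
    ext t i
    simp only [Pi.sub_apply, Pi.smul_apply, smul_eq_mul]
    ring
  rw [h, intervalIntegral.integral_sub ((hγ.smul_const _).sub (hσ.smul_const _))
      (hv.smul_const _), intervalIntegral.integral_sub (hγ.smul_const _) (hσ.smul_const _),
    intervalIntegral.integral_smul_const, intervalIntegral.integral_smul_const,
    intervalIntegral.integral_smul_const]

end Score

lemma gaussianReal_prod_map_const_mul_sub (c m₁ m₂ : ℝ) (v₁ v₂ : ℝ≥0) :
    ((gaussianReal m₁ v₁).prod (gaussianReal m₂ v₂)).map (fun p => c * (p.2 - p.1)) =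
      gaussianReal (c * (m₂ - m₁)) (.mk (c ^ 2) (sq_nonneg _) * (v₁ + v₂)) := by
  have h : (fun p : ℝ × ℝ => c * (p.2 - p.1)) =
      (c * ·) ∘ (fun p => p.1 + p.2) ∘ Prod.map (fun x => -x) id := by
    ext p
    simp [neg_add_eq_sub]
  rw [h, ← Measure.map_map (by fun_prop) (by fun_prop),
    ← Measure.map_map (by fun_prop) (by fun_prop),
    ← Measure.map_prod_map _ _ (by fun_prop) (by fun_prop), gaussianReal_map_neg,
    Measure.map_id, ← Measure.conv, gaussianReal_conv_gaussianReal, gaussianReal_map_const_mul,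
    neg_add_eq_sub]

lemma gaussianReal_prod_prod_map (c₁ c₂ k m₁ m₂ n₁ n₂ : ℝ) (v₁ v₂ w₁ w₂ : ℝ≥0) :
    (((gaussianReal m₁ v₁).prod (gaussianReal m₂ v₂)).prod
        ((gaussianReal n₁ w₁).prod (gaussianReal n₂ w₂))).map
        (fun q => c₁ * (q.1.2 - q.1.1) + c₂ * (q.2.2 - q.2.1) + k) =
      gaussianReal (c₁ * (m₂ - m₁) + c₂ * (n₂ - n₁) + k)
        (.mk (c₁ ^ 2) (sq_nonneg _) * (v₁ + v₂) + .mk (c₂ ^ 2) (sq_nonneg _) * (w₁ + w₂)) := by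
  have h : (fun q : (ℝ × ℝ) × (ℝ × ℝ) => c₁ * (q.1.2 - q.1.1) + c₂ * (q.2.2 - q.2.1) + k) =
      (· + k) ∘ (fun p => p.1 + p.2) ∘
        Prod.map (fun p : ℝ × ℝ => c₁ * (p.2 - p.1)) (fun p : ℝ × ℝ => c₂ * (p.2 - p.1)) := rfl
  rw [h, ← Measure.map_map (by fun_prop) (by fun_prop),
    ← Measure.map_map (by fun_prop) (by fun_prop),
    ← Measure.map_prod_map _ _ (by fun_prop) (by fun_prop), gaussianReal_prod_map_const_mul_sub,
    gaussianReal_prod_map_const_mul_sub, ← Measure.conv, gaussianReal_conv_gaussianReal,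
    gaussianReal_map_add_const]

lemma map_prod_prod_pi_eq_pi_map {ι α β : Type*} [Fintype ι] [MeasurableSpace α] [MeasurableSpace β]
    (μ₁ μ₂ μ₃ μ₄ : ι → Measure α) [∀ i, IsFiniteMeasure (μ₁ i)] [∀ i, IsFiniteMeasure (μ₂ i)]
    [∀ i, IsFiniteMeasure (μ₃ i)] [∀ i, IsFiniteMeasure (μ₄ i)]
    (f : ι → (α × α) × (α × α) → β) (hf : ∀ i, Measurable (f i)) :
    (((Measure.pi μ₁).prod (Measure.pi μ₂)).prod ((Measure.pi μ₃).prod (Measure.pi μ₄))).map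
        (fun p i => f i ((p.1.1 i, p.1.2 i), (p.2.1 i, p.2.2 i))) =
      Measure.pi fun i => (((μ₁ i).prod (μ₂ i)).prod ((μ₃ i).prod (μ₄ i))).map (f i) := by
  have h := ((measurePreserving_arrowProdEquivProdArrow α α ι μ₁ μ₂).prod
    (measurePreserving_arrowProdEquivProdArrow α α ι μ₃ μ₄)).comp
    (measurePreserving_arrowProdEquivProdArrow (α × α) (α × α) ι _ _)
  rw [← h.map_eq, Measure.map_map (by fun_prop) h.measurable,
    ← Measure.pi_map_pi fun i => (hf i).aemeasurable]
  rfl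

theorem eps_difference_law_general (d : ℕ) (T : ℝ) (μ : Fin d → ℝ)
    (σx : ℝ) (ε : Fin d → ℝ) (γ σ : ℝ → ℝ) (v : ℝ → ℝ)
    (hint1 : IntervalIntegrable (fun t => γ t / v t) volume 0 T)
    (hint2 : IntervalIntegrable (fun t => σ t / v t) volume 0 T)
    (hint3 : IntervalIntegrable (fun t => 1 / v t) volume 0 T) :
    Measure.map
      (fun p : ((Fin d → ℝ) × (Fin d → ℝ)) × ((Fin d → ℝ) × (Fin d → ℝ)) =>
        ((1 / T) • ∫ t in (0 : ℝ)..T,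
            (fun i => -(γ t * p.1.1 i + σ t * p.2.1 i - γ t * μ i) / v t))
        - ((1 / T) • ∫ t in (0 : ℝ)..T,
            (fun i => -(γ t * p.1.2 i + σ t * p.2.2 i + ε i - γ t * μ i) / v t)))
      (((Measure.pi fun i => gaussianReal (μ i) ((σx ^ 2).toNNReal)).prod
          (Measure.pi fun i => gaussianReal (μ i) ((σx ^ 2).toNNReal))).prod
        ((Measure.pi fun _ => gaussianReal 0 1).prod
          (Measure.pi fun _ => gaussianReal 0 1)))
    = Measure.pi fun i => gaussianReal
        (((1 / T) * ∫ t in (0 : ℝ)..T, 1 / v t) * ε i)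
        ((2 * (((1 / T) * ∫ t in (0 : ℝ)..T, γ t / v t) ^ 2 * σx ^ 2
          + ((1 / T) * ∫ t in (0 : ℝ)..T, σ t / v t) ^ 2)).toNNReal) := by
  set a := (1 / T) * ∫ t in (0 : ℝ)..T, γ t / v t
  set b := (1 / T) * ∫ t in (0 : ℝ)..T, σ t / v t
  set c := (1 / T) * ∫ t in (0 : ℝ)..T, 1 / v t
  have hdiff : ∀ p : ((Fin d → ℝ) × (Fin d → ℝ)) × ((Fin d → ℝ) × (Fin d → ℝ)),
      ((1 / T) • ∫ t in (0 : ℝ)..T,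
          (fun i => -(γ t * p.1.1 i + σ t * p.2.1 i - γ t * μ i) / v t))
        - ((1 / T) • ∫ t in (0 : ℝ)..T,
          (fun i => -(γ t * p.1.2 i + σ t * p.2.2 i + ε i - γ t * μ i) / v t)) =
      fun i => a * (p.1.2 i - p.1.1 i) + b * (p.2.2 i - p.2.1 i) + c * ε i := by
    intro p
    rw [intervalIntegral_score hint1 hint2, intervalIntegral_adversarialScore hint1 hint2 hint3]
    ext i
    simp only [Pi.sub_apply, Pi.smul_apply, smul_eq_mul, a, b, c]
    ring
  simp_rw [hdiff]
  refine (map_prod_prod_pi_eq_pi_map _ _ _ _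
    (fun i q => a * (q.1.2 - q.1.1) + b * (q.2.2 - q.2.1) + c * ε i) fun i => by fun_prop).trans
    (congrArg Measure.pi (funext fun i => ?_))
  rw [gaussianReal_prod_prod_map]
  congr 1
  · ring
  · ext
    simp only [NNReal.coe_add, NNReal.coe_mul, NNReal.coe_mk, NNReal.coe_one,
      Real.coe_toNNReal _ (sq_nonneg σx),
      Real.coe_toNNReal _ (by positivity : (0 : ℝ) ≤ 2 * (a ^ 2 * σx ^ 2 + b ^ 2))]
    ring

/-- Theorem 1, conclusion 3, EPS difference law: for mutually independent
`X₀, Y₀ ~ N(μ, σx²·I)` and `Z, Z′ ~ N(0, I)`, the difference `S − Ŝ` between the EPS of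
a natural sample and the EPS of an independent adversarial sample is Gaussian with mean
`c•ε` and per-coordinate variance `2(a²σx² + b²)`, where `a = (1/T)∫₀ᵀ γ t/(v t) dt`,
`b = (1/T)∫₀ᵀ σ t/(v t) dt`, `c = (1/T)∫₀ᵀ 1/(v t) dt`. -/
theorem eps_difference_law (d : ℕ) (hd : 1 ≤ d) (T : ℝ) (hT : 0 < T) (μ : Fin d → ℝ)
    (σx : ℝ) (hσx : 0 ≤ σx) (ε : Fin d → ℝ) (γ σ : ℝ → ℝ) (hγ : Measurable γ)
    (hσ : Measurable σ) (v : ℝ → ℝ) (hv : ∀ t, v t = (γ t) ^ 2 * σx ^ 2 + (σ t) ^ 2)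
    (hvpos : ∀ t ∈ Set.Icc (0 : ℝ) T, 0 < v t)
    (hint1 : IntervalIntegrable (fun t => γ t / v t) volume 0 T)
    (hint2 : IntervalIntegrable (fun t => σ t / v t) volume 0 T)
    (hint3 : IntervalIntegrable (fun t => 1 / v t) volume 0 T) :
    Measure.map
      (fun p : ((Fin d → ℝ) × (Fin d → ℝ)) × ((Fin d → ℝ) × (Fin d → ℝ)) =>
        ((1 / T) • ∫ t in (0 : ℝ)..T,
            (fun i => -(γ t * p.1.1 i + σ t * p.2.1 i - γ t * μ i) / v t))
        - ((1 / T) • ∫ t in (0 : ℝ)..T,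
            (fun i => -(γ t * p.1.2 i + σ t * p.2.2 i + ε i - γ t * μ i) / v t)))
      (((Measure.pi fun i => gaussianReal (μ i) ((σx ^ 2).toNNReal)).prod
          (Measure.pi fun i => gaussianReal (μ i) ((σx ^ 2).toNNReal))).prod
        ((Measure.pi fun _ => gaussianReal 0 1).prod
          (Measure.pi fun _ => gaussianReal 0 1)))
    = Measure.pi fun i => gaussianReal
        (((1 / T) * ∫ t in (0 : ℝ)..T, 1 / v t) * ε i)
        ((2 * (((1 / T) * ∫ t in (0 : ℝ)..T, γ t / v t) ^ 2 * σx ^ 2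
          + ((1 / T) * ∫ t in (0 : ℝ)..T, σ t / v t) ^ 2)).toNNReal) :=
  eps_difference_law_general d T μ σx ε γ σ v hint1 hint2 hint3
end

section
/- (The natural cross-term dominates the adversarial cross-term) Fix d ≥ 1, σ > 0, τ ≥ 0 and m : Fin d → ℝ with m ≠ 0. Then ∫ Real.exp(−(∑ i, (x i)²)/(2σ²)) d(Measure.pi fun i => gaussianReal (m i) τ²)(x) < ∫ Real.exp(−(∑ i, (x i)²)/(2σ²)) d(Measure.pi fun i => gaussianReal 0 τ²)(x); i.e., the expected Gaussian kernel between EPSs is strictly smaller when the difference of EPSs has nonzero mean (natural vs. adversarial pair) than when it has mean zero (natural vs. natural pair), so the EPS-based MMD between natural and adversarial samples exceeds that among natural samples in expectation. -/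
/-!
Both expectations have a closed form. Completing the square in the one-dimensional Gaussian
integral gives `E[exp (-X²/(2σ²))] = σ/√(σ²+v) · exp (-μ²/(2(σ²+v)))` for `X ~ N(μ, v)`, and the
product measure turns the `d`-dimensional integral into a product of these. The two sides then
differ only by the factor `exp (-‖m‖²/(2(σ²+τ²)))`, which is `< 1` as soon as `m ≠ 0`.
-/

open MeasureTheory ProbabilityTheory Real NNReal

lemma integral_exp_neg_mul_add_sq (a c : ℝ) :
    ∫ x : ℝ, exp (-(a * (x + c) ^ 2)) = √(π / a) := by
  rw [integral_add_right_eq_self (fun x => exp (-(a * x ^ 2))) c]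
  simp_rw [← neg_mul]
  exact integral_gaussian a

lemma integral_exp_neg_sq_div_gaussianReal {σ : ℝ} (hσ : 0 < σ) (μ : ℝ) (v : ℝ≥0) :
    ∫ x, exp (-x ^ 2 / (2 * σ ^ 2)) ∂gaussianReal μ v
      = σ / √(σ ^ 2 + v) * exp (-μ ^ 2 / (2 * (σ ^ 2 + v))) := by
  rcases eq_or_ne v 0 with rfl | hv
  · simp [sqrt_sq hσ.le, hσ.ne']
  have hv' : (0 : ℝ) < v := by positivity
  set a := (σ ^ 2 + v) / (2 * v * σ ^ 2)
  have complete_sq : ∀ x, gaussianPDFReal μ v x • exp (-x ^ 2 / (2 * σ ^ 2))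
      = (√(2 * π * v))⁻¹ * exp (-μ ^ 2 / (2 * (σ ^ 2 + v)))
        * exp (-(a * (x + -(μ * σ ^ 2) / (σ ^ 2 + v)) ^ 2)) := by
    intro x
    simp only [gaussianPDFReal, smul_eq_mul, mul_assoc _ (exp _), ← exp_add]
    congr 2
    simp only [a]
    field_simp
    ring
  have sqrt_π_div_a : √(π / a) = √(2 * π * v) * (σ / √(σ ^ 2 + v)) := by
    rw [← sqrt_sq (by positivity : 0 ≤ σ / √(σ ^ 2 + v)), ← sqrt_mul (by positivity), div_pow,
      sq_sqrt (by positivity)]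
    congr 1
    simp only [a]
    field_simp
  rw [integral_gaussianReal_eq_integral_smul hv]
  simp_rw [complete_sq]
  rw [integral_const_mul, integral_exp_neg_mul_add_sq, sqrt_π_div_a]
  field_simp

lemma integral_exp_neg_sum_sq_div_pi_gaussianReal {ι : Type*} [Fintype ι] {σ : ℝ} (hσ : 0 < σ)
    (μ : ι → ℝ) (v : ℝ≥0) :
    ∫ x, exp (-(∑ i, x i ^ 2) / (2 * σ ^ 2)) ∂(Measure.pi fun i => gaussianReal (μ i) v)
      = (σ / √(σ ^ 2 + v)) ^ Fintype.card ι * exp (-(∑ i, μ i ^ 2) / (2 * (σ ^ 2 + v))) := by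
  have exp_sum_div (y : ι → ℝ) (s : ℝ) :
      exp (-(∑ i, y i ^ 2) / s) = ∏ i, exp (-y i ^ 2 / s) := by
    rw [← exp_sum, ← Finset.sum_div, Finset.sum_neg_distrib]
  simp_rw [exp_sum_div]
  rw [integral_fintype_prod_eq_prod (fun _ y => exp (-y ^ 2 / (2 * σ ^ 2)))]
  simp_rw [integral_exp_neg_sq_div_gaussianReal hσ, Finset.prod_mul_distrib, Finset.prod_const,
    Finset.card_univ]

theorem expected_kernel_strict_anti_general (d : ℕ) (σ : ℝ) (hσ : 0 < σ) (τ : ℝ)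
    (m : Fin d → ℝ) (hm : m ≠ 0) :
    ∫ x, Real.exp (-(∑ i, (x i) ^ 2) / (2 * σ ^ 2))
        ∂(Measure.pi fun i => gaussianReal (m i) ((τ ^ 2).toNNReal))
    < ∫ x, Real.exp (-(∑ i, (x i) ^ 2) / (2 * σ ^ 2))
        ∂(Measure.pi fun _ : Fin d => gaussianReal 0 ((τ ^ 2).toNNReal)) := by
  rw [integral_exp_neg_sum_sq_div_pi_gaussianReal hσ,
    integral_exp_neg_sum_sq_div_pi_gaussianReal hσ (fun _ => 0)]
  have sum_sq_pos : 0 < ∑ i, m i ^ 2 := by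
    obtain ⟨i, hi⟩ := Function.ne_iff.mp hm
    exact Finset.sum_pos' (fun j _ => sq_nonneg (m j)) ⟨i, Finset.mem_univ i, sq_pos_of_ne_zero hi⟩
  simp only [zero_pow two_ne_zero, Finset.sum_const_zero, neg_zero, zero_div, exp_zero, mul_one]
  refine mul_lt_of_lt_one_right (by positivity) (exp_lt_one_iff.mpr ?_)
  exact div_neg_of_neg_of_pos (neg_neg_of_pos sum_sq_pos) (by positivity)

/-- The natural cross-term dominates the adversarial cross-term: the expected Gaussian
kernel between EPSs is strictly smaller when the difference of EPSs has nonzero mean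
(natural vs. adversarial pair) than when it has mean zero (natural vs. natural pair). -/
theorem expected_kernel_strict_anti (d : ℕ) (hd : 1 ≤ d) (σ : ℝ) (hσ : 0 < σ) (τ : ℝ)
    (hτ : 0 ≤ τ) (m : Fin d → ℝ) (hm : m ≠ 0) :
    ∫ x, Real.exp (-(∑ i, (x i) ^ 2) / (2 * σ ^ 2))
        ∂(Measure.pi fun i => gaussianReal (m i) ((τ ^ 2).toNNReal))
    < ∫ x, Real.exp (-(∑ i, (x i) ^ 2) / (2 * σ ^ 2))
        ∂(Measure.pi fun _ : Fin d => gaussianReal 0 ((τ ^ 2).toNNReal)) :=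
  expected_kernel_strict_anti_general d σ hσ τ m hm
end
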